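/- Let S be a semigroup and h : 𝓘↗∞(ℤ) → S a semigroup homomorphism. If there exist distinct idempotents ε, φ ∈ 𝓘↗∞(ℤ) with h(ε) = h(φ), then h(ψ) = h(𝕀) for every idempotent ψ of 𝓘↗∞(ℤ), where 𝕀 is the identity map of ℤ. -/

import Mathlib

/-- A monotone injective partial self-map of `ℤ` with cofinite domain and cofinite range,
encoded as a function `ℤ → Option ℤ` where `none` means "undefined". -/
structure IsMIP (f : ℤ → Option ℤ) : Prop where
  inj : ∀ ⦃x y a : ℤ⦄, f x = some a → f y = some a → x = y
  mono : ∀ ⦃x y a b : ℤ⦄, f x = some a → f y = some b → x ≤ y → a ≤ b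
  cofin_dom : {x : ℤ | f x = none}.Finite
  cofin_ran : {y : ℤ | ∀ x : ℤ, f x ≠ some y}.Finite

/-- The monoid `𝓘↗∞(ℤ)` of monotone injective partial self-maps of `ℤ`
with cofinite domain and cofinite range. -/
def IZ : Type := {f : ℤ → Option ℤ // IsMIP f}

namespace IZ

/-- Composition of partial maps, written left-to-right: `(pcomp f g) x = g (f x)`. -/
def pcomp (f g : ℤ → Option ℤ) : ℤ → Option ℤ := fun x => (f x).bind g

theorem isMIP_id : IsMIP (fun x : ℤ => some x) := by
  refine ⟨?_, ?_, ?_, ?_⟩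
  · intro x y a hx hy; simp_all
  · intro x y a b hx hy h; simp_all
  · simp
  · have : {y : ℤ | ∀ x : ℤ, (fun x : ℤ => some x) x ≠ some y} = ∅ := by
      ext y; simp
    rw [this]; exact Set.finite_empty

theorem isMIP_comp {f g : ℤ → Option ℤ} (hf : IsMIP f) (hg : IsMIP g) :
    IsMIP (pcomp f g) := by
  refine ⟨?_, ?_, ?_, ?_⟩
  · intro x y a hx hy
    rw [pcomp, Option.bind_eq_some_iff] at hx hy
    obtain ⟨b, hb, hba⟩ := hx
    obtain ⟨c, hc, hca⟩ := hy
    have hbc : b = c := hg.inj hba hca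
    subst hbc
    exact hf.inj hb hc
  · intro x y a b hx hy hxy
    rw [pcomp, Option.bind_eq_some_iff] at hx hy
    obtain ⟨p, hp, hpa⟩ := hx
    obtain ⟨q, hq, hqb⟩ := hy
    exact hg.mono hpa hqb (hf.mono hp hq hxy)
  · have hsub : {x : ℤ | pcomp f g x = none} ⊆
        {x : ℤ | f x = none} ∪ f ⁻¹' (Option.some '' {a : ℤ | g a = none}) := by
      intro x hx
      simp only [Set.mem_setOf_eq, pcomp] at hx
      cases hfx : f x with
      | none => exact Or.inl hfx
      | some a =>
        right
        rw [hfx] at hx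
        simp only [Option.bind_some] at hx
        exact ⟨a, hx, hfx.symm⟩
    refine Set.Finite.subset (Set.Finite.union hf.cofin_dom ?_) hsub
    refine Set.Finite.preimage ?_ (hg.cofin_dom.image _)
    intro x hx y hy hxy
    obtain ⟨a, _, ha⟩ := hx
    obtain ⟨b, _, hb⟩ := hy
    have hfa : f x = some a := ha.symm
    have hfb : f y = some b := hb.symm
    have : some a = some b := by rw [← hfa, ← hfb, hxy]
    rw [Option.some_inj] at this
    subst this
    exact hf.inj hfa hfb
  · have hsub : {y : ℤ | ∀ x : ℤ, pcomp f g x ≠ some y} ⊆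
        {y : ℤ | ∀ x : ℤ, g x ≠ some y} ∪
          ((fun a => (g a).getD 0) '' {a : ℤ | ∀ x : ℤ, f x ≠ some a}) := by
      intro y hy
      simp only [Set.mem_setOf_eq] at hy
      by_cases hgy : ∀ a : ℤ, g a ≠ some y
      · exact Or.inl hgy
      · push_neg at hgy
        obtain ⟨a, hga⟩ := hgy
        right
        refine ⟨a, ?_, by simp [hga]⟩
        intro x hfx
        exact hy x (by simp [pcomp, hfx, hga])
    exact Set.Finite.subset (Set.Finite.union hg.cofin_ran (hf.cofin_ran.image _)) hsub

instance : Monoid IZ where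
  one := ⟨fun x => some x, isMIP_id⟩
  mul a b := ⟨pcomp a.1 b.1, isMIP_comp a.2 b.2⟩
  mul_assoc a b c := by
    apply Subtype.ext
    funext x
    exact Option.bind_assoc (a.1 x) b.1 c.1
  one_mul a := by
    apply Subtype.ext
    funext x
    rfl
  mul_one a := by
    apply Subtype.ext
    funext x
    show (a.1 x).bind some = a.1 x
    cases a.1 x <;> rfl

theorem mul_def (a b : IZ) : (a * b).1 = pcomp a.1 b.1 := rfl

theorem one_def : (1 : IZ).1 = fun x : ℤ => some x := rfl

/-- The domain of an element of `𝓘↗∞(ℤ)`. -/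
def dom (a : IZ) : Set ℤ := {x : ℤ | a.1 x ≠ none}

/-- The range of an element of `𝓘↗∞(ℤ)`. -/
def ran (a : IZ) : Set ℤ := {y : ℤ | ∃ x : ℤ, a.1 x = some y}

end IZ

/-!
Idempotents of `𝓘↗∞(ℤ)` are the partial identities of `ℤ` with finitely many holes, and each
is the product of the one-hole idempotents at its holes, so it suffices that `h` sends every
one-hole idempotent to `h 𝕀`. If `ε` and `φ` are idempotents with `p ∈ dom ε ∖ dom φ`, conjugate
both by the order embedding `ℤ → ℤ` that sends `q` to `p` and every other point beyond all holes
of `ε` and `φ`, i.e. form `a * _ * b` with `b` its partial inverse: this turns `ε` into `𝕀` and `φ`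
into the idempotent whose only hole is `q`.
-/

noncomputable section

namespace IZ

@[ext]
theorem ext {a b : IZ} (h : ∀ x, a.1 x = b.1 x) : a = b :=
  Subtype.ext (funext h)

theorem mul_apply (a b : IZ) (x : ℤ) : (a * b).1 x = (a.1 x).bind b.1 := rfl

theorem one_apply (x : ℤ) : (1 : IZ).1 x = some x := rfl

def holes (a : IZ) : Finset ℤ := a.2.cofin_dom.toFinset

theorem mem_holes {a : IZ} {x : ℤ} : x ∈ a.holes ↔ a.1 x = none :=
  Set.Finite.mem_toFinset _

section Idempotent

variable {ψ : IZ}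

theorem eq_of_apply_eq_some_of_isIdempotentElem (hψ : IsIdempotentElem ψ) {x a : ℤ}
    (hx : ψ.1 x = some a) : a = x := by
  have h2 : (ψ * ψ).1 x = ψ.1 x := by rw [hψ]
  rw [mul_apply, hx, Option.bind_some] at h2
  exact ψ.2.inj h2 hx

theorem apply_eq_some_self_or_none (hψ : IsIdempotentElem ψ) (x : ℤ) :
    ψ.1 x = some x ∨ ψ.1 x = none := by
  cases hx : ψ.1 x with
  | none => exact Or.inr rfl
  | some a => exact Or.inl (by rw [eq_of_apply_eq_some_of_isIdempotentElem hψ hx])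

theorem apply_eq_some_self_of_notMem_holes (hψ : IsIdempotentElem ψ) {x : ℤ}
    (hx : x ∉ ψ.holes) : ψ.1 x = some x :=
  (apply_eq_some_self_or_none hψ x).resolve_right (mt mem_holes.2 hx)

end Idempotent

theorem isMIP_partialId (s : Finset ℤ) : IsMIP (fun x => if x ∈ s then none else some x) := by
  refine ⟨fun x y a hx hy => ?_, fun x y a b hx hy hxy => ?_, ?_, ?_⟩
  · split_ifs at hx hy; simp_all
  · split_ifs at hx hy; simp_all
  · exact s.finite_toSet.subset fun x hx => by by_contra h; simp [h] at hx
  · exact s.finite_toSet.subset fun y hy => by by_contra h; exact hy y (if_neg h)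

def partialId (s : Finset ℤ) : IZ := ⟨_, isMIP_partialId s⟩

theorem partialId_apply (s : Finset ℤ) (x : ℤ) :
    (partialId s).1 x = if x ∈ s then none else some x := rfl

theorem partialId_empty : partialId ∅ = 1 :=
  ext fun x => by simp [partialId_apply, one_apply]

theorem partialId_insert (q : ℤ) (s : Finset ℤ) :
    partialId (insert q s) = partialId {q} * partialId s :=
  ext fun x => by
    by_cases hq : x = q <;> simp [partialId_apply, mul_apply, hq]

theorem eq_partialId_holes {ψ : IZ} (hψ : IsIdempotentElem ψ) : ψ = partialId ψ.holes :=
  ext fun x => by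
    rw [partialId_apply]
    split_ifs with hx
    · exact mem_holes.1 hx
    · exact apply_eq_some_self_of_notMem_holes hψ hx

section StrictMono

variable {f : ℤ → ℤ} (hf : StrictMono f) (hran : (Set.range f)ᶜ.Finite)

def ofStrictMono : IZ :=
  ⟨fun x => some (f x),
    ⟨fun _ _ _ hx hy => hf.injective (Option.some_inj.1 (hx.trans hy.symm)),
      fun _ _ _ _ hx hy hxy => by
        rw [Option.some_inj] at hx hy
        exact hx ▸ hy ▸ hf.monotone hxy,
      by simp,
      hran.subset fun y hy ⟨x, hx⟩ => hy x (congrArg some hx)⟩⟩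

open scoped Classical in
def invOfStrictMono : IZ :=
  ⟨fun y => if y ∈ Set.range f then some (Function.invFun f y) else none,
    ⟨fun y y' a hy hy' => by
        split_ifs at hy hy' with h h'
        rw [Option.some_inj] at hy hy'
        rw [← Function.invFun_eq h, ← Function.invFun_eq h', hy, hy'],
      fun y y' a b hy hy' hyy' => by
        split_ifs at hy hy' with h h'
        rw [Option.some_inj] at hy hy'
        rw [← hy, ← hy', ← hf.le_iff_le, Function.invFun_eq h, Function.invFun_eq h']
        exact hyy',
      hran.subset fun y hy h => by
        rw [Set.mem_ofPred_eq, if_pos h] at hy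
        exact Option.some_ne_none _ hy,
      Set.Finite.subset Set.finite_empty fun x hx =>
        hx (f x) (by rw [if_pos ⟨x, rfl⟩, Function.leftInverse_invFun hf.injective x])⟩⟩

variable {hf hran}

theorem ofStrictMono_mul_mul_invOfStrictMono_apply (ψ : IZ) (x : ℤ) :
    (ofStrictMono hf hran * ψ * invOfStrictMono hf hran).1 x =
      (ψ.1 (f x)).bind (invOfStrictMono hf hran).1 :=
  rfl

open scoped Classical in
theorem invOfStrictMono_apply_apply (x : ℤ) : (invOfStrictMono hf hran).1 (f x) = some x := by
  change (if f x ∈ Set.range f then _ else none) = _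
  rw [if_pos ⟨x, rfl⟩, Function.leftInverse_invFun hf.injective x]

theorem ofStrictMono_mul_mul_invOfStrictMono_apply_of_apply_eq_some {ψ : IZ} {x : ℤ}
    (hx : ψ.1 (f x) = some (f x)) :
    (ofStrictMono hf hran * ψ * invOfStrictMono hf hran).1 x = some x := by
  rw [ofStrictMono_mul_mul_invOfStrictMono_apply, hx, Option.bind_some,
    invOfStrictMono_apply_apply]

theorem ofStrictMono_mul_mul_invOfStrictMono_apply_of_apply_eq_none {ψ : IZ} {x : ℤ}
    (hx : ψ.1 (f x) = none) :
    (ofStrictMono hf hran * ψ * invOfStrictMono hf hran).1 x = none := by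
  rw [ofStrictMono_mul_mul_invOfStrictMono_apply, hx, Option.bind_none]

end StrictMono

def spread (q p : ℤ) (K : ℕ) (x : ℤ) : ℤ :=
  if x < q then x - q + p - K else if x = q then p else x - q + p + K

section Spread

variable (q p : ℤ) (K : ℕ)

theorem strictMono_spread : StrictMono (spread q p K) := fun x y hxy => by
  unfold spread
  split_ifs <;> omega

theorem finite_compl_range_spread : (Set.range (spread q p K))ᶜ.Finite := by
  refine (Set.finite_Icc (p - K) (p + K)).subset fun y hy => ?_
  rw [Set.mem_compl_iff, Set.mem_range, not_exists] at hy
  by_contra hI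
  rw [Set.mem_Icc, not_and_or, not_le, not_le] at hI
  rcases hI with hlt | hgt
  · exact hy (y - p + q + K) (by unfold spread; split_ifs <;> omega)
  · exact hy (y - p + q - K) (by unfold spread; split_ifs <;> omega)

theorem spread_self : spread q p K q = p := by
  simp [spread]

variable {q p K}

theorem lt_natAbs_spread_sub_of_ne {x : ℤ} (hx : x ≠ q) :
    K < (spread q p K x - p).natAbs := by
  unfold spread
  split_ifs <;> omega

end Spread

theorem exists_mul_mul_eq_one_and_partialId {ε φ : IZ} (hε : IsIdempotentElem ε)
    (hφ : IsIdempotentElem φ) {p : ℤ} (hεp : ε.1 p = some p) (hφp : φ.1 p = none) (q : ℤ) :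
    ∃ a b : IZ, a * ε * b = 1 ∧ a * φ * b = partialId {q} := by
  set K := (ε.holes ∪ φ.holes).sup fun x => (x - p).natAbs
  have hfar : ∀ x ≠ q, spread q p K x ∉ ε.holes ∪ φ.holes := fun x hx hmem =>
    (lt_natAbs_spread_sub_of_ne hx).not_ge (Finset.le_sup (f := fun x => (x - p).natAbs) hmem)
  have hfix : ∀ {ψ : IZ}, IsIdempotentElem ψ → ψ.holes ⊆ ε.holes ∪ φ.holes →
      ∀ x ≠ q, ψ.1 (spread q p K x) = some (spread q p K x) := fun hψ hsub x hx =>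
    apply_eq_some_self_of_notMem_holes hψ fun hmem => hfar x hx (hsub hmem)
  refine ⟨ofStrictMono (strictMono_spread q p K) (finite_compl_range_spread q p K),
    invOfStrictMono (strictMono_spread q p K) (finite_compl_range_spread q p K),
    ext fun x => ?_, ext fun x => ?_⟩
  · rw [one_apply]
    apply ofStrictMono_mul_mul_invOfStrictMono_apply_of_apply_eq_some
    by_cases hx : x = q
    · rw [hx, spread_self, hεp]
    · exact hfix hε Finset.subset_union_left x hx
  · rw [partialId_apply]
    split_ifs with hx
    · rw [Finset.mem_singleton] at hx
      apply ofStrictMono_mul_mul_invOfStrictMono_apply_of_apply_eq_none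
      rw [hx, spread_self, hφp]
    · apply ofStrictMono_mul_mul_invOfStrictMono_apply_of_apply_eq_some
      exact hfix hφ Finset.subset_union_right x (Finset.notMem_singleton.1 hx)

theorem exists_apply_eq_some_self_and_apply_eq_none {ε φ : IZ} (hε : IsIdempotentElem ε)
    (hφ : IsIdempotentElem φ) (hne : ε ≠ φ) :
    ∃ p, (ε.1 p = some p ∧ φ.1 p = none) ∨ (φ.1 p = some p ∧ ε.1 p = none) := by
  obtain ⟨p, hp⟩ : ∃ p, ε.1 p ≠ φ.1 p := by
    by_contra! hc
    exact hne (ext hc)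
  refine ⟨p, ?_⟩
  rcases apply_eq_some_self_or_none hε p with h1 | h1 <;>
    rcases apply_eq_some_self_or_none hφ p with h2 | h2 <;> simp_all

section Hom

variable {S : Type*} [Semigroup S] (h : IZ →ₙ* S)

theorem map_partialId_singleton_eq_map_one {ε φ : IZ} (hε : IsIdempotentElem ε)
    (hφ : IsIdempotentElem φ) {p : ℤ} (hεp : ε.1 p = some p) (hφp : φ.1 p = none)
    (heq : h ε = h φ) (q : ℤ) : h (partialId {q}) = h 1 := by
  obtain ⟨a, b, hone, hq⟩ := exists_mul_mul_eq_one_and_partialId hε hφ hεp hφp q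
  rw [← hone, ← hq, map_mul, map_mul, map_mul, map_mul, heq]

theorem map_partialId_eq_map_one (hq : ∀ q, h (partialId {q}) = h 1) (s : Finset ℤ) :
    h (partialId s) = h 1 := by
  induction s using Finset.induction_on with
  | empty => rw [partialId_empty]
  | insert q s _ ih => rw [partialId_insert, map_mul, hq, ih, ← map_mul, one_mul]

end Hom

end IZ

end

/-- If a semigroup homomorphism `h` from `𝓘↗∞(ℤ)` to a semigroup `S`
identifies two distinct idempotents, then it identifies every idempotent with `h 𝕀`. -/
theorem statement13 {S : Type*} [Semigroup S] (h : IZ → S)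
    (hhom : ∀ a b : IZ, h (a * b) = h a * h b)
    (ε φ : IZ) (hε : ε * ε = ε) (hφ : φ * φ = φ) (hne : ε ≠ φ)
    (heq : h ε = h φ) :
    ∀ ψ : IZ, ψ * ψ = ψ → h ψ = h 1 := by
  let H : IZ →ₙ* S := ⟨h, hhom⟩
  have hsingle : ∀ q, H (IZ.partialId {q}) = H 1 := by
    obtain ⟨p, ⟨hεp, hφp⟩ | ⟨hφp, hεp⟩⟩ :=
      IZ.exists_apply_eq_some_self_and_apply_eq_none hε hφ hne
    · exact IZ.map_partialId_singleton_eq_map_one H hε hφ hεp hφp heq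
    · exact IZ.map_partialId_singleton_eq_map_one H hφ hε hφp hεp heq.symm
  intro ψ hψ
  rw [IZ.eq_partialId_holes hψ]
  exact IZ.map_partialId_eq_map_one H hsingle ψ.holes
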